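/- Let n be a positive integer, λ an infinite cardinal, and τ a shift-continuous T₁ topology on I_λ^n. Then every element α of I_λ^n of rank exactly n is an isolated point of (I_λ^n, τ). -/

import Mathlib

open Set Topology

universe v

namespace ISemi

/-- The set of partial injective transformations (partial bijections) of `ι`
with rank (cardinality of the range, equivalently of the domain) at most `n`. -/
def Elem (ι : Type*) (n : ℕ) : Type _ :=
  {f : ι ≃. ι // {a : ι | (f a).isSome}.encard ≤ (n : ℕ∞)}

variable {ι : Type*} {n : ℕ}

/-- Composition of partial bijections (written multiplicatively). -/
instance : Semigroup (Elem ι n) where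
  mul f g := ⟨f.1.trans g.1, by
    refine le_trans (Set.encard_mono ?_) f.2
    intro a ha
    simp only [Set.mem_setOf_eq] at *
    rcases Option.isSome_iff_exists.1 ha with ⟨c, hc⟩
    rcases (PEquiv.trans_eq_some _ _ _ _).1 hc with ⟨b, hb, -⟩
    simp [hb]⟩
  mul_assoc f g h := Subtype.ext (PEquiv.trans_assoc f.1 g.1 h.1)

/-- The inverse partial bijection. -/
def inv (f : Elem ι n) : Elem ι n := ⟨f.1.symm, by
  have key : ∀ (g : ι ≃. ι), {b : ι | (g.symm b).isSome} ⊆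
      (fun p : {a : ι | (g a).isSome} => (g p.1).get p.2) '' Set.univ := by
    intro g b hb
    rcases Option.isSome_iff_exists.1 hb with ⟨a, ha⟩
    have ha' : b ∈ g a := (PEquiv.mem_iff_mem g).1 (Option.mem_def.2 ha)
    simp only [Option.mem_def] at ha'
    refine ⟨⟨a, ?_⟩, Set.mem_univ _, ?_⟩
    · simp [Set.mem_setOf_eq, ha']
    · simp [ha']
  calc {b : ι | (f.1.symm b).isSome}.encard
      ≤ ((fun p : {a : ι | (f.1 a).isSome} => (f.1 p.1).get p.2) '' Set.univ).encard :=
        Set.encard_mono (key f.1)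
    _ ≤ (Set.univ : Set {a : ι | (f.1 a).isSome}).encard := Set.encard_image_le _ _
    _ = {a : ι | (f.1 a).isSome}.encard := by rw [Set.encard_univ, ENat.card_coe_set_eq]
    _ ≤ (n : ℕ∞) := f.2⟩

/-- The zero (the empty partial map). -/
def zero (ι : Type*) (n : ℕ) : Elem ι n := ⟨⊥, by simp [PEquiv.bot_apply]⟩

/-- idempotents -/
def IsIdem (e : Elem ι n) : Prop := e * e = e

/-- The natural partial order on the inverse semigroup `Elem ι n`:
`f ≼ g` iff `f = e * g` for some idempotent `e`. -/
def nle (f g : Elem ι n) : Prop := ∃ e : Elem ι n, IsIdem e ∧ f = e * g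

/-- up-set of `f` w.r.t. the natural partial order -/
def upset (f : Elem ι n) : Set (Elem ι n) := {g | nle f g}

/-- the rank of a partial bijection: the cardinality of its domain (= range) -/
noncomputable def rank (f : Elem ι n) : ℕ∞ := {a : ι | (f.1 a).isSome}.encard

def dom (f : Elem ι n) : Set ι := {a : ι | (f.1 a).isSome}

def ran (f : Elem ι n) : Set ι := {b : ι | (f.1.symm b).isSome}

/-- A topology on `Elem ι n` is shift-continuous if all left and right
translations are continuous. -/
def ShiftContinuous (ι : Type*) (n : ℕ) [TopologicalSpace (Elem ι n)] : Prop :=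
  ∀ a : Elem ι n, Continuous (fun x : Elem ι n => a * x) ∧
    Continuous (fun x : Elem ι n => x * a)

/-- A space is feebly compact if every locally finite family of nonempty open
sets is finite. -/
def FeeblyCompact (X : Type*) [TopologicalSpace X] : Prop :=
  ∀ 𝒰 : Set (Set X), (∀ U ∈ 𝒰, IsOpen U ∧ U.Nonempty) →
    LocallyFinite (fun U : 𝒰 => (U : Set X)) → 𝒰.Finite

/-- A space is `d`-feebly compact if every discrete family of open sets is
finite; a family is discrete if every point has a neighbourhood meeting at
most one member of the family. -/
def DFeeblyCompact (X : Type*) [TopologicalSpace X] : Prop :=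
  ∀ 𝒰 : Set (Set X), (∀ U ∈ 𝒰, IsOpen U) →
    (∀ x : X, ∃ V ∈ 𝓝 x, {U ∈ 𝒰 | (U ∩ V).Nonempty}.Subsingleton) → 𝒰.Finite

/-- countably pracompact: there is a dense set `A` such that every infinite
subset of `A` has an accumulation point in `X`. -/
def CountablyPracompact (X : Type*) [TopologicalSpace X] : Prop :=
  ∃ A : Set X, Dense A ∧ ∀ B ⊆ A, B.Infinite → ∃ x : X, AccPt x (Filter.principal B)

/-- H-closed: closed in every Hausdorff space in which it embeds. -/
def HClosed (X : Type*) [TopologicalSpace X] : Prop :=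
  ∀ (Y : Type v) (_ : TopologicalSpace Y), T2Space Y →
    ∀ e : X → Y, IsEmbedding e → IsClosed (Set.range e)

/-- infra H-closed: every continuous image in a first-countable Hausdorff
space is closed. -/
def InfraHClosed (X : Type*) [TopologicalSpace X] : Prop :=
  ∀ (Y : Type v) (_ : TopologicalSpace Y), T2Space Y →
    FirstCountableTopology Y → ∀ f : X → Y, Continuous f → IsClosed (Set.range f)

/-- `Y`-compactness: every continuous image in `Y` is compact. -/
def YCompact (X : Type*) [TopologicalSpace X] (Y : Type*) [TopologicalSpace Y] : Prop :=
  ∀ f : X → Y, Continuous f → IsCompact (Set.range f)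

/-- scattered: every nonempty subset has a point isolated in it. -/
def Scattered (X : Type*) [TopologicalSpace X] : Prop :=
  ∀ S : Set X, S.Nonempty → ∃ x ∈ S, ∃ U : Set X, IsOpen U ∧ U ∩ S = {x}

/-- semiregular: there is a base consisting of regular open sets. -/
def Semiregular (X : Type*) [TopologicalSpace X] : Prop :=
  ∃ B : Set (Set X), TopologicalSpace.IsTopologicalBasis B ∧
    ∀ U ∈ B, interior (closure U) = U

/-- countably compact: every countable open cover has a finite subcover. -/
def CountablyCompact (X : Type*) [TopologicalSpace X] : Prop :=
  ∀ 𝒰 : Set (Set X), 𝒰.Countable → (∀ U ∈ 𝒰, IsOpen U) → ⋃₀ 𝒰 = Set.univ →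
    ∃ 𝒱 ⊆ 𝒰, 𝒱.Finite ∧ ⋃₀ 𝒱 = Set.univ

/-!
The map `x ↦ (a a⁻¹) x (a⁻¹ a)` is continuous by shift-continuity and cuts `x` down to a partial
bijection from `dom a` to `ran a`, so it takes only finitely many values. Its fibre over `a` is
`{a}`: a partial bijection extending `a` on `dom a` has rank at least that of `a`, hence equals `a`
when `a` has the maximal rank `n`. In a `T₁` space the fibres of a continuous map with finite
range are open.
-/

lemma mem_dom_of_mem {f : Elem ι n} {b c : ι} (h : c ∈ f.1 b) : b ∈ dom f :=
  Option.isSome_iff_exists.2 ⟨c, h⟩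

lemma mem_ran_of_mem {f : Elem ι n} {b c : ι} (h : c ∈ f.1 b) : c ∈ ran f :=
  Option.isSome_iff_exists.2 ⟨b, (PEquiv.mem_iff_mem f.1).2 h⟩

lemma finite_dom (f : Elem ι n) : (dom f).Finite :=
  Set.finite_of_encard_le_coe f.2

lemma finite_ran (f : Elem ι n) : (ran f).Finite :=
  Set.finite_of_encard_le_coe (inv f).2

lemma dom_subset_of_val_le {f g : Elem ι n} (h : f.1 ≤ g.1) : dom f ⊆ dom g := fun b hb => by
  obtain ⟨c, hc⟩ := Option.isSome_iff_exists.1 hb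
  exact mem_dom_of_mem (PEquiv.le_def.1 h b c hc)

lemma eq_of_val_le_of_rank_eq {a x : Elem ι n} (ha : rank a = n) (h : a.1 ≤ x.1) : x = a := by
  have hdom : dom a = dom x :=
    (finite_dom x).eq_of_subset_of_encard_le' (dom_subset_of_val_le h) (x.2.trans ha.ge)
  refine Subtype.ext (PEquiv.ext fun b => ?_)
  by_cases hb : b ∈ dom a
  · obtain ⟨c, hc⟩ := Option.isSome_iff_exists.1 hb
    rw [hc, PEquiv.le_def.1 h b c hc]
  · have hbx : b ∉ dom x := hdom ▸ hb
    simp only [dom, mem_ofPred_eq, Option.not_isSome_iff_eq_none] at hb hbx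
    rw [hb, hbx]

def restrict (a x : Elem ι n) : Elem ι n := a * inv a * x * (inv a * a)

lemma continuous_restrict [TopologicalSpace (Elem ι n)] (hshift : ShiftContinuous ι n)
    (a : Elem ι n) : Continuous (restrict a) :=
  (hshift (inv a * a)).2.comp (hshift (a * inv a)).1

/-- `a a⁻¹` and `a⁻¹ a` are the identities on `dom a` and `ran a`. -/
lemma mem_restrict_apply {a x : Elem ι n} {b c : ι} :
    c ∈ (restrict a x).1 b ↔ b ∈ dom a ∧ c ∈ ran a ∧ c ∈ x.1 b := by
  change c ∈ ((a.1.trans a.1.symm).trans x.1).trans (a.1.symm.trans a.1) b ↔ _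
  rw [PEquiv.self_trans_symm, PEquiv.symm_trans_self]
  simp only [PEquiv.mem_trans, PEquiv.mem_ofSet_iff, dom, ran, mem_ofPred_eq]
  constructor
  · rintro ⟨y, ⟨z, ⟨rfl, hz⟩, hy⟩, rfl, hc⟩
    exact ⟨hz, hc, hy⟩
  · rintro ⟨hb, hc, hx⟩
    exact ⟨c, ⟨b, ⟨rfl, hb⟩, hx⟩, rfl, hc⟩

lemma val_restrict_le (a x : Elem ι n) : (restrict a x).1 ≤ x.1 :=
  PEquiv.le_def.2 fun _ _ h => (mem_restrict_apply.1 h).2.2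

lemma restrict_self (a : Elem ι n) : restrict a a = a :=
  Subtype.ext <| le_antisymm (val_restrict_le a a) <| PEquiv.le_def.2 fun _ _ h =>
    mem_restrict_apply.2 ⟨mem_dom_of_mem h, mem_ran_of_mem h, h⟩

lemma restrict_eq_self_iff {a x : Elem ι n} (ha : rank a = n) : restrict a x = a ↔ x = a :=
  ⟨fun h => eq_of_val_le_of_rank_eq ha (h ▸ val_restrict_le a x), fun h => h ▸ restrict_self a⟩

def graph (f : Elem ι n) : Set (ι × ι) := {p | p.2 ∈ f.1 p.1}

lemma graph_injective : Function.Injective (graph : Elem ι n → Set (ι × ι)) := fun _ _ h =>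
  Subtype.ext (PEquiv.ext fun b => Option.ext fun c => Set.ext_iff.1 h (b, c))

lemma finite_range_restrict (a : Elem ι n) : (range (restrict a)).Finite := by
  refine Set.Finite.of_finite_image ?_ graph_injective.injOn
  refine ((finite_dom a).prod (finite_ran a)).finite_subsets.subset ?_
  rintro _ ⟨_, ⟨x, rfl⟩, rfl⟩ ⟨b, c⟩ h
  exact ⟨(mem_restrict_apply.1 h).1, (mem_restrict_apply.1 h).2.1⟩

end ISemi

lemma Continuous.isOpen_preimage_singleton_of_finite_range {X Y : Type*} [TopologicalSpace X]
    [TopologicalSpace Y] [T1Space Y] {f : X → Y} (hf : Continuous f) (hfin : (range f).Finite)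
    (y : Y) : IsOpen (f ⁻¹' {y}) := by
  have hfiber : f ⁻¹' {y} = f ⁻¹' (range f \ {y})ᶜ := by ext x; simp
  rw [hfiber]
  exact hfin.sdiff.isClosed.isOpen_compl.preimage hf

theorem stmt10_general (ι : Type*) (n : ℕ)
    [TopologicalSpace (ISemi.Elem ι n)] [T1Space (ISemi.Elem ι n)]
    (hshift : ISemi.ShiftContinuous ι n) (a : ISemi.Elem ι n) (ha : ISemi.rank a = (n : ℕ∞)) :
    IsOpen {a} := by
  have hfiber : {a} = ISemi.restrict a ⁻¹' {a} := by
    ext x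
    exact (ISemi.restrict_eq_self_iff ha).symm
  rw [hfiber]
  exact (ISemi.continuous_restrict hshift a).isOpen_preimage_singleton_of_finite_range
    (ISemi.finite_range_restrict a) a

theorem stmt10 (ι : Type*) [Infinite ι] (n : ℕ) (hn : 0 < n)
    [TopologicalSpace (ISemi.Elem ι n)] [T1Space (ISemi.Elem ι n)]
    (hshift : ISemi.ShiftContinuous ι n) (a : ISemi.Elem ι n) (ha : ISemi.rank a = (n : ℕ∞)) :
    IsOpen {a} :=
  stmt10_general ι n hshift a ha
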